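/- arXiv:1104.4877 — 3 statements merged into one kernel-verified Lean document; each statement's English description precedes it below -/
import Mathlib

section
/- For any nonnegative measurable function f on ℝⁿ and any k ∈ (0, n), if the k-th moment M_k(f) = ∫ f(v)|v|^k dv is finite and the entropy H(f) = ∫ f log f dv is finite (i.e., the positive part integral is finite), then ∫ f|log f| dv is finite; more precisely there exists a constant c(n,k) > 0, independent of f, such that ∫ f(v)|log f(v)| dv ≤ ∫ f(v) log f(v) dv + c(n,k) · M_k(f)^{n/(n+k)}. -/
open MeasureTheory Real Module

/-! Write `|log f| = log⁺ f + log⁺ f⁻¹`, so that `∫ f |log f| = ∫ f log f + 2 ∫ f log⁺ f⁻¹` and only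
the part where `f < 1` has to be controlled. Pointwise, `f log⁺ f⁻¹ ≤ 2 √f`, and either
`log⁺ f⁻¹ ≤ 2a|v|^k` or `√f ≤ exp (-a|v|^k)`; hence `f log⁺ f⁻¹ ≤ 2 (a f |v|^k + exp (-a|v|^k))`
for every `a > 0`. Integrating and scaling `v ↦ a^(1/k) v` gives
`∫ f log⁺ f⁻¹ ≤ 2 (a M_k(f) + a^(-n/k) ∫ exp (-|v|^k))`, and `a = M_k(f)^(-k/(n+k))` balances
the two terms. -/

theorem abs_log_eq_posLog_add_posLog_inv (x : ℝ) : |log x| = log⁺ x + log⁺ x⁻¹ := by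
  rw [posLog_apply, posLog_apply, log_inv]
  rcases le_total 0 (log x) with h | h
  · rw [abs_of_nonneg h, max_eq_right h, max_eq_left (neg_nonpos.2 h), add_zero]
  · rw [abs_of_nonpos h, max_eq_left h, max_eq_right (neg_nonneg.2 h), zero_add]

theorem mul_posLog_inv_le_two_mul_sqrt {x : ℝ} (hx : 0 ≤ x) : x * log⁺ x⁻¹ ≤ 2 * √x := by
  rcases hx.eq_or_lt with rfl | hx
  · simp
  have hlog : log x⁻¹ ≤ 2 / √x :=
    calc log x⁻¹ ≤ x⁻¹ ^ (1 / 2 : ℝ) / (1 / 2) := log_le_rpow_div (inv_nonneg.2 hx.le) one_half_pos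
      _ = 2 / √x := by rw [← sqrt_eq_rpow, sqrt_inv]; ring
  calc x * log⁺ x⁻¹ ≤ x * (2 / √x) :=
        mul_le_mul_of_nonneg_left (max_le (by positivity) hlog) hx.le
    _ = 2 * √x := by
        have := mul_self_sqrt hx.le
        have := sqrt_pos.2 hx
        field_simp
        linarith

theorem mul_posLog_inv_le {x t a : ℝ} (hx : 0 ≤ x) (ht : 0 ≤ t) (ha : 0 ≤ a) :
    x * log⁺ x⁻¹ ≤ 2 * (a * (x * t) + exp (-a * t)) := by
  have hat : 0 ≤ a * t := mul_nonneg ha ht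
  rcases le_or_gt (log⁺ x⁻¹) (2 * (a * t)) with hsmall | hlarge
  · nlinarith [mul_le_mul_of_nonneg_left hsmall hx, exp_pos (-a * t)]
  have hx0 : 0 < x := by
    refine hx.lt_of_ne fun h => ?_
    rw [← h, inv_zero, posLog_zero] at hlarge
    linarith
  have hlog : 2 * (a * t) < -log x := by
    rw [posLog_apply, log_inv] at hlarge
    exact (lt_max_iff.1 hlarge).resolve_left (by linarith)
  have hsqrt : √x ≤ exp (-a * t) := by
    rw [← log_le_iff_le_exp (sqrt_pos.2 hx0), log_sqrt hx]
    linarith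
  nlinarith [mul_posLog_inv_le_two_mul_sqrt hx, mul_nonneg ha (mul_nonneg hx ht)]

section HaarMeasure

variable {E : Type*} [NormedAddCommGroup E] [NormedSpace ℝ E] [FiniteDimensional ℝ E]
  [MeasurableSpace E] [BorelSpace E] (μ : Measure E) [μ.IsAddHaarMeasure]

theorem integral_exp_neg_mul_norm_rpow {b k : ℝ} (hb : 0 < b) (hk : 0 < k) :
    ∫ v, exp (-b * ‖v‖ ^ k) ∂μ = b ^ (-(finrank ℝ E / k)) * ∫ v, exp (-‖v‖ ^ k) ∂μ := by
  have hR : 0 < b ^ k⁻¹ := rpow_pos_of_pos hb _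
  have hscale : ∀ v : E, exp (-‖b ^ k⁻¹ • v‖ ^ k) = exp (-b * ‖v‖ ^ k) := fun v => by
    rw [norm_smul, norm_of_nonneg hR.le, mul_rpow hR.le (norm_nonneg v), ← rpow_mul hb.le,
      inv_mul_cancel₀ hk.ne', rpow_one, neg_mul]
  simp_rw [← hscale]
  rw [Measure.integral_comp_smul μ (fun v => exp (-‖v‖ ^ k)), smul_eq_mul,
    abs_of_pos (by positivity), ← rpow_natCast, ← rpow_mul hb.le, ← rpow_neg hb.le, inv_mul_eq_div]

variable [Nontrivial E]

theorem integrable_exp_neg_mul_norm_rpow {b k : ℝ} (hb : 0 < b) (hk : 0 < k) :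
    Integrable (fun v => exp (-b * ‖v‖ ^ k)) μ := by
  rw [integrable_fun_norm_addHaar μ (f := fun t => exp (-b * t ^ k))]
  refine (integrableOn_rpow_mul_exp_neg_mul_rpow (s := (finrank ℝ E - 1 : ℕ)) ?_ hk hb).congr_fun
    (fun y _ => by simp only [rpow_natCast, smul_eq_mul]) measurableSet_Ioi
  have : (0 : ℝ) ≤ (finrank ℝ E - 1 : ℕ) := Nat.cast_nonneg _
  linarith

theorem ae_eq_zero_of_integral_mul_norm_rpow_eq_zero {f : E → ℝ} {k : ℝ} (hf0 : ∀ v, 0 ≤ f v)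
    (hM : Integrable (fun v => f v * ‖v‖ ^ k) μ) (h : ∫ v, f v * ‖v‖ ^ k ∂μ = 0) :
    f =ᵐ[μ] 0 := by
  have hzero := (integral_eq_zero_iff_of_nonneg
    (fun v => mul_nonneg (hf0 v) (rpow_nonneg (norm_nonneg v) k)) hM).1 h
  filter_upwards [hzero, compl_mem_ae_iff.2 (measure_singleton (0 : E))] with v hv hv0
  exact (mul_eq_zero.1 hv).resolve_right (rpow_pos_of_pos (norm_pos_iff.2 hv0) k).ne'

variable {μ} {f : E → ℝ} {k : ℝ}

theorem integrable_mul_posLog_inv (hf : Measurable f) (hf0 : ∀ v, 0 ≤ f v) (hk : 0 < k)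
    (hM : Integrable (fun v => f v * ‖v‖ ^ k) μ) :
    Integrable (fun v => f v * log⁺ (f v)⁻¹) μ := by
  refine (((hM.const_mul 1).add (integrable_exp_neg_mul_norm_rpow μ one_pos hk)).const_mul 2).mono'
    (by fun_prop) (.of_forall fun v => ?_)
  rw [norm_of_nonneg (mul_nonneg (hf0 v) posLog_nonneg)]
  exact mul_posLog_inv_le (hf0 v) (rpow_nonneg (norm_nonneg v) k) zero_le_one

theorem integral_mul_posLog_inv_le_of_pos (hf : Measurable f) (hf0 : ∀ v, 0 ≤ f v) (hk : 0 < k)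
    (hM : Integrable (fun v => f v * ‖v‖ ^ k) μ) {a : ℝ} (ha : 0 < a) :
    ∫ v, f v * log⁺ (f v)⁻¹ ∂μ ≤
      2 * (a * ∫ v, f v * ‖v‖ ^ k ∂μ + a ^ (-(finrank ℝ E / k)) * ∫ v, exp (-‖v‖ ^ k) ∂μ) := by
  have hdom := (hM.const_mul a).add (integrable_exp_neg_mul_norm_rpow μ ha hk)
  calc ∫ v, f v * log⁺ (f v)⁻¹ ∂μ ≤ ∫ v, 2 * (a * (f v * ‖v‖ ^ k) + exp (-a * ‖v‖ ^ k)) ∂μ :=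
        integral_mono (integrable_mul_posLog_inv hf hf0 hk hM) (hdom.const_mul 2) fun v =>
          mul_posLog_inv_le (hf0 v) (rpow_nonneg (norm_nonneg v) k) ha.le
    _ = _ := by
        rw [integral_const_mul, integral_add (hM.const_mul a)
          (integrable_exp_neg_mul_norm_rpow μ ha hk), integral_const_mul,
          integral_exp_neg_mul_norm_rpow μ ha hk]

theorem integral_mul_posLog_inv_le (hf : Measurable f) (hf0 : ∀ v, 0 ≤ f v) (hk : 0 < k)
    (hM : Integrable (fun v => f v * ‖v‖ ^ k) μ) :
    ∫ v, f v * log⁺ (f v)⁻¹ ∂μ ≤ 2 * (1 + ∫ v, exp (-‖v‖ ^ k) ∂μ) *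
      (∫ v, f v * ‖v‖ ^ k ∂μ) ^ (finrank ℝ E / (finrank ℝ E + k)) := by
  set d : ℝ := (finrank ℝ E : ℝ)
  set M := ∫ v, f v * ‖v‖ ^ k ∂μ
  have hd : 0 < d := Nat.cast_pos.2 finrank_pos
  have hM_nonneg : 0 ≤ M :=
    integral_nonneg fun v => mul_nonneg (hf0 v) (rpow_nonneg (norm_nonneg v) k)
  rcases hM_nonneg.eq_or_lt with hM0 | hM0
  · have hzero : (fun v => f v * log⁺ (f v)⁻¹) =ᵐ[μ] 0 := by
      filter_upwards [ae_eq_zero_of_integral_mul_norm_rpow_eq_zero μ hf0 hM hM0.symm] with v hv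
      simp [hv]
    rw [integral_congr_ae hzero, ← hM0, zero_rpow (by positivity)]
    simp
  · have hJ : 0 ≤ ∫ v, exp (-‖v‖ ^ k) ∂μ := integral_nonneg fun v => (exp_pos _).le
    have h := integral_mul_posLog_inv_le_of_pos hf hf0 hk hM (rpow_pos_of_pos hM0 (-(k / (d + k))))
    have e1 : M ^ (-(k / (d + k))) * M = M ^ (d / (d + k)) := by
      rw [← rpow_add_one hM0.ne']; congr 1; field_simp; ring
    have e2 : (M ^ (-(k / (d + k)))) ^ (-(d / k)) = M ^ (d / (d + k)) := by
      rw [← rpow_mul hM0.le]; congr 1; field_simp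
    rw [e1, e2] at h
    nlinarith [rpow_nonneg hM0.le (d / (d + k))]

end HaarMeasure

theorem integral_mul_abs_log_eq {α : Type*} [MeasurableSpace α] {μ : Measure α} {f : α → ℝ}
    (hpos : Integrable (fun v => f v * log⁺ (f v)) μ)
    (hneg : Integrable (fun v => f v * log⁺ (f v)⁻¹) μ) :
    ∫ v, f v * |log (f v)| ∂μ = ∫ v, f v * log (f v) ∂μ + 2 * ∫ v, f v * log⁺ (f v)⁻¹ ∂μ := by
  simp_rw [abs_log_eq_posLog_add_posLog_inv, ← posLog_sub_posLog_inv, mul_add, mul_sub]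
  rw [integral_add hpos hneg, integral_sub hpos hneg]
  ring

theorem entropy_modulus_bound_general (n : ℕ) (hn : 0 < n) (k : ℝ) (hk : 0 < k) :
    ∃ c : ℝ, 0 < c ∧
      ∀ f : EuclideanSpace ℝ (Fin n) → ℝ, Measurable f → (∀ v, 0 ≤ f v) →
        Integrable (fun v => f v * ‖v‖ ^ k) →
        Integrable (fun v => f v * max (Real.log (f v)) 0) →
        Integrable (fun v => f v * |Real.log (f v)|) ∧
          ∫ v, f v * |Real.log (f v)| ≤
            (∫ v, f v * Real.log (f v)) +
              c * (∫ v, f v * ‖v‖ ^ k) ^ (n / (n + k)) := by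
  have : Nontrivial (EuclideanSpace ℝ (Fin n)) :=
    have : Nonempty (Fin n) := ⟨⟨0, hn⟩⟩
    inferInstance
  refine ⟨4 * (1 + ∫ v : EuclideanSpace ℝ (Fin n), exp (-‖v‖ ^ k)), by positivity, ?_⟩
  intro f hf hf0 hM hP
  have hpos : Integrable (fun v => f v * log⁺ (f v)) :=
    hP.congr (.of_forall fun v => by simp only [posLog_apply, max_comm])
  have hneg := integrable_mul_posLog_inv hf hf0 hk hM
  have hbound := integral_mul_posLog_inv_le hf hf0 hk hM
  rw [finrank_euclideanSpace_fin] at hbound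
  refine ⟨(hpos.add hneg).congr (.of_forall fun v => ?_), ?_⟩
  · simp only [Pi.add_apply, abs_log_eq_posLog_add_posLog_inv, mul_add]
  · rw [integral_mul_abs_log_eq hpos hneg]
    linarith

/-- For any measurable nonnegative `f` on `ℝⁿ` and `k ∈ (0,n)`: if the `k`-th moment
and the positive part of the entropy are finite, then `∫ f |log f|` is finite and
`∫ f |log f| ≤ ∫ f log f + c(n,k) (∫ f |v|^k)^(n/(n+k))`. -/
theorem entropy_modulus_bound (n : ℕ) (hn : 0 < n) (k : ℝ) (hk : 0 < k) (hkn : k < n) :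
    ∃ c : ℝ, 0 < c ∧
      ∀ f : EuclideanSpace ℝ (Fin n) → ℝ, Measurable f → (∀ v, 0 ≤ f v) →
        Integrable (fun v => f v * ‖v‖ ^ k) →
        Integrable (fun v => f v * max (Real.log (f v)) 0) →
        Integrable (fun v => f v * |Real.log (f v)|) ∧
          ∫ v, f v * |Real.log (f v)| ≤
            (∫ v, f v * Real.log (f v)) +
              c * (∫ v, f v * ‖v‖ ^ k) ^ (n / (n + k)) :=
  entropy_modulus_bound_general n hn k hk
end

section
/- Let γ > 0, Ψ(x) ≥ c x^{(3+γ)/2} for x near 0 (c > 0), and let E : [0,∞) → (0,∞) be differentiable, decreasing to 0, with E'(t) ≤ −Ψ(E(t)) for all t ≥ 0. Then there exist C > 0 and t₀ > 0 such that E(t) ≤ C (1+t)^{−2/(1+γ)} for all t ≥ t₀. -/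
open Filter

/-- ODE comparison for the upper bound in generalized Haff's law: if
`Ψ(x) ≥ c x^{(3+γ)/2}` near `0`, `E > 0` decreases to `0` and `E' ≤ -Ψ(E)`,
then `E(t) ≤ C (1+t)^{-2/(1+γ)}` for large times. -/
theorem haff_upper_bound (γ c : ℝ) (hγ : 0 < γ) (hc : 0 < c)
    (Ψ : ℝ → ℝ) (δ : ℝ) (hδ : 0 < δ)
    (hΨ : ∀ x : ℝ, x ∈ Set.Ioo 0 δ → Ψ x ≥ c * x ^ ((3 + γ) / 2))
    (E E' : ℝ → ℝ) (hpos : ∀ t, 0 ≤ t → 0 < E t)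
    (hanti : AntitoneOn E (Set.Ici (0:ℝ)))
    (hlim : Tendsto E atTop (nhds 0))
    (hderiv : ∀ t, 0 ≤ t → HasDerivAt E (E' t) t)
    (hineq : ∀ t, 0 ≤ t → E' t ≤ -Ψ (E t)) :
    ∃ C t₀ : ℝ, 0 < C ∧ 0 < t₀ ∧
      ∀ t, t₀ ≤ t → E t ≤ C * (1 + t) ^ (-(2 / (1 + γ))) := by
  set α : ℝ := (1 + γ) / 2 with hα
  have hαpos : 0 < α := by positivity
  have h1γ : 0 < 1 + γ := by linarith
  -- find T such that E t < δ for t ≥ T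
  obtain ⟨T, hT⟩ := eventually_atTop.mp (hlim.eventually (gt_mem_nhds hδ))
  set t₀ : ℝ := max T 1 with ht₀def
  have ht₀pos : (0:ℝ) < t₀ := lt_of_lt_of_le one_pos (le_max_right _ _)
  have hEδ : ∀ t, t₀ ≤ t → E t < δ := fun t ht =>
    hT t (le_trans (le_max_left _ _) ht)
  have hEt₀ : ∀ t, t₀ ≤ t → 0 < E t := fun t ht => hpos t (le_trans ht₀pos.le ht)
  -- derivative of H t = E t ^ (-α) - α*c*t on [t₀, ∞)
  have key : ∀ t, t₀ ≤ t →
      HasDerivAt (fun s => E s ^ (-α) - α * c * s)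
        (E' t * (-α) * E t ^ (-α - 1) - α * c) t := by
    intro t ht
    have h0t : (0:ℝ) ≤ t := le_trans ht₀pos.le ht
    have h2 : HasDerivAt (fun s => α * c * s) (α * c) t := by
      simpa using (hasDerivAt_id t).const_mul (α * c)
    exact ((hderiv t h0t).rpow_const (Or.inl (hEt₀ t ht).ne')).sub h2
  have keyge : ∀ t, t₀ ≤ t → α * c ≤ E' t * (-α) * E t ^ (-α - 1) := by
    intro t ht
    have hb : 0 < E t := hEt₀ t ht
    have h0t : (0:ℝ) ≤ t := le_trans ht₀pos.le ht
    have hE' : -E' t ≥ c * E t ^ ((3 + γ) / 2) := by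
      have := hineq t h0t
      have := hΨ (E t) ⟨hb, hEδ t ht⟩
      linarith
    have hpow : (0:ℝ) < E t ^ (-α - 1) := Real.rpow_pos_of_pos hb _
    have h1 : α * c * (E t ^ ((3 + γ) / 2) * E t ^ (-α - 1))
        ≤ α * (-E' t) * E t ^ (-α - 1) := by
      have := mul_le_mul_of_nonneg_right hE' hpow.le
      nlinarith
    have h2 : E t ^ ((3 + γ) / 2) * E t ^ (-α - 1) = 1 := by
      rw [← Real.rpow_add hb]
      have : (3 + γ) / 2 + (-α - 1) = 0 := by rw [hα]; ring
      rw [this, Real.rpow_zero]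
    rw [h2, mul_one] at h1
    calc α * c ≤ α * (-E' t) * E t ^ (-α - 1) := h1
      _ = E' t * (-α) * E t ^ (-α - 1) := by ring
  -- monotonicity of H on Ici t₀
  have hmono : MonotoneOn (fun s => E s ^ (-α) - α * c * s) (Set.Ici t₀) := by
    apply monotoneOn_of_deriv_nonneg (convex_Ici t₀)
    · exact fun t ht => ((key t ht).continuousAt).continuousWithinAt
    · intro t ht
      rw [interior_Ici] at ht
      exact ((key t ht.le).differentiableAt).differentiableWithinAt
    · intro t ht
      rw [interior_Ici] at ht
      rw [((key t ht.le).deriv)]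
      have := keyge t ht.le
      linarith
  have hG : ∀ t, t₀ ≤ t → E t₀ ^ (-α) + α * c * (t - t₀) ≤ E t ^ (-α) := by
    intro t ht
    have := hmono (Set.self_mem_Ici) (Set.mem_Ici.mpr ht) ht
    simp only at this
    linarith
  -- choose k
  set k : ℝ := min (E t₀ ^ (-α) / (1 + t₀)) (α * c) with hk
  have h1t₀ : 0 < 1 + t₀ := by linarith
  have hkpos : 0 < k :=
    lt_min (div_pos (Real.rpow_pos_of_pos (hEt₀ t₀ le_rfl) _) h1t₀) (by positivity)
  have hlin : ∀ t, t₀ ≤ t → k * (1 + t) ≤ E t ^ (-α) := by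
    intro t ht
    have h1 : k * (1 + t₀) ≤ E t₀ ^ (-α) := by
      have := min_le_left (E t₀ ^ (-α) / (1 + t₀)) (α * c)
      calc k * (1 + t₀) ≤ (E t₀ ^ (-α) / (1 + t₀)) * (1 + t₀) :=
            mul_le_mul_of_nonneg_right this h1t₀.le
        _ = E t₀ ^ (-α) := div_mul_cancel₀ _ h1t₀.ne'
    have h2 : k * (t - t₀) ≤ α * c * (t - t₀) :=
      mul_le_mul_of_nonneg_right (min_le_right _ _) (by linarith)
    have := hG t ht
    nlinarith
  refine ⟨k ^ (-(1/α)), t₀, Real.rpow_pos_of_pos hkpos _, ht₀pos, ?_⟩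
  intro t ht
  have hb : 0 < E t := hEt₀ t ht
  have h1t : 0 < 1 + t := by linarith [le_trans ht₀pos.le ht]
  have hexp : -(2 / (1 + γ)) = -(1/α) := by
    rw [hα]; field_simp
  rw [hexp]
  have hneg : -(1/α) ≤ 0 := neg_nonpos_of_nonneg (by positivity)
  -- E t = (E t ^ (-α)) ^ (-(1/α))
  have hEeq : E t = (E t ^ (-α)) ^ (-(1/α)) := by
    rw [← Real.rpow_mul hb.le]
    have hm : -α * -(1/α) = 1 := by field_simp
    rw [hm, Real.rpow_one]
  calc E t = (E t ^ (-α)) ^ (-(1/α)) := hEeq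
    _ ≤ (k * (1 + t)) ^ (-(1/α)) :=
        Real.rpow_le_rpow_of_nonpos (by positivity) (hlin t ht) hneg
    _ = k ^ (-(1/α)) * (1 + t) ^ (-(1/α)) :=
        Real.mul_rpow hkpos.le h1t.le
end

section
/- Let e : (0,∞) → (0,1] be implicitly defined by e(r) + a r^{1/5} e(r)^{3/5} = 1 for all r > 0, with a > 0 (viscoelastic hard-spheres restitution). Then: (i) such e(r) exists and is unique for each r > 0; (ii) e(r) · a^{5/3} r^{1/3} → 1 as r → ∞; (iii) ℓ_{1/5}(e) := sup_{r>0} (1 − e(r))/r^{1/5} = a. -/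
/-!
Put `c = a r^{1/5}`. Since `x ↦ x + c x^{3/5}` is strictly increasing on `[0, ∞)`, the root
is unique. Raising `1 - e = c e^{3/5}` to the power `5/3` gives
`e · a^{5/3} r^{1/3} = (1 - e)^{5/3} ≤ 1`, so `e → 0` and then `e · a^{5/3} r^{1/3} → 1` as
`r → ∞`. Dividing by `r^{1/5}` instead gives `(1 - e)/r^{1/5} = a e^{3/5} ≤ a`, and `a` is
approached as `r → 0⁺`, where `1 - a r^{1/5} ≤ e ≤ 1` forces `e → 1`.
-/

open Filter Topology Set

lemma strictMonoOn_add_mul_rpow {c p : ℝ} (hc : 0 ≤ c) (hp : 0 ≤ p) :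
    StrictMonoOn (fun x : ℝ => x + c * x ^ p) (Ici 0) := fun _ hx _ _ hxy =>
  add_lt_add_of_lt_of_le hxy (mul_le_mul_of_nonneg_left (Real.rpow_le_rpow hx hxy.le hp) hc)

lemma mul_rpow_eq_one_sub_rpow_of_add_mul_rpow_eq_one {x c p q : ℝ} (hx : 0 ≤ x) (hc : 0 ≤ c)
    (hpq : p * q = 1) (h : x + c * x ^ p = 1) : x * c ^ q = (1 - x) ^ q := by
  rw [show 1 - x = c * x ^ p by linarith, Real.mul_rpow hc (Real.rpow_nonneg hx p),
    ← Real.rpow_mul hx, hpq, Real.rpow_one, mul_comm]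

lemma tendsto_nhds_zero_of_mul_le_one {α : Type*} {l : Filter α} {f g : α → ℝ}
    (hf : ∀ᶠ x in l, 0 ≤ f x) (hfg : ∀ᶠ x in l, f x * g x ≤ 1)
    (hg : Tendsto g l atTop) :
    Tendsto f l (𝓝 0) := by
  refine tendsto_of_tendsto_of_tendsto_of_le_of_le' tendsto_const_nhds hg.inv_tendsto_atTop
    hf ?_
  filter_upwards [hfg, hg.eventually_gt_atTop 0] with x hfgx hgx
  rwa [Pi.inv_apply, inv_eq_one_div, le_div_iff₀ hgx]

section Restitution

variable {a r x : ℝ} {e : ℝ → ℝ}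

lemma restitution_mul_eq (ha : 0 ≤ a) (hr : 0 < r) (hx : 0 ≤ x)
    (h : x + a * r ^ ((1:ℝ)/5) * x ^ ((3:ℝ)/5) = 1) :
    x * a ^ ((5:ℝ)/3) * r ^ ((1:ℝ)/3) = (1 - x) ^ ((5:ℝ)/3) := by
  have hc : 0 ≤ a * r ^ ((1:ℝ)/5) := mul_nonneg ha (Real.rpow_nonneg hr.le _)
  rw [← mul_rpow_eq_one_sub_rpow_of_add_mul_rpow_eq_one hx hc (by norm_num) h,
    Real.mul_rpow ha (Real.rpow_nonneg hr.le _), ← Real.rpow_mul hr.le]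
  norm_num [mul_assoc]

lemma restitution_div_eq (hr : 0 < r) (h : x + a * r ^ ((1:ℝ)/5) * x ^ ((3:ℝ)/5) = 1) :
    (1 - x) / r ^ ((1:ℝ)/5) = a * x ^ ((3:ℝ)/5) := by
  rw [div_eq_iff (Real.rpow_pos_of_pos hr _).ne']
  linarith

lemma restitution_div_le (ha : 0 ≤ a) (hr : 0 < r) (hx : x ∈ Ioc 0 1)
    (h : x + a * r ^ ((1:ℝ)/5) * x ^ ((3:ℝ)/5) = 1) :
    (1 - x) / r ^ ((1:ℝ)/5) ≤ a := by
  rw [restitution_div_eq hr h]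
  exact mul_le_of_le_one_right ha (Real.rpow_le_one hx.1.le hx.2 (by norm_num))

lemma tendsto_restitution_atTop_zero (ha : 0 < a) (hrange : ∀ r : ℝ, 0 < r → e r ∈ Ioc 0 1)
    (himp : ∀ r : ℝ, 0 < r → e r + a * r ^ ((1:ℝ)/5) * e r ^ ((3:ℝ)/5) = 1) :
    Tendsto e atTop (𝓝 0) := by
  refine tendsto_nhds_zero_of_mul_le_one ?_ ?_
    ((tendsto_rpow_atTop (by norm_num : (0:ℝ) < 1/3)).const_mul_atTop
      (by positivity : 0 < a ^ ((5:ℝ)/3)))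
  · filter_upwards [eventually_gt_atTop 0] with r hr using (hrange r hr).1.le
  · filter_upwards [eventually_gt_atTop 0] with r hr
    obtain ⟨he0, he1⟩ := hrange r hr
    rw [← mul_assoc, restitution_mul_eq ha.le hr he0.le (himp r hr)]
    exact Real.rpow_le_one (by linarith) (by linarith) (by norm_num)

lemma tendsto_restitution_mul_atTop (ha : 0 < a) (hrange : ∀ r : ℝ, 0 < r → e r ∈ Ioc 0 1)
    (himp : ∀ r : ℝ, 0 < r → e r + a * r ^ ((1:ℝ)/5) * e r ^ ((3:ℝ)/5) = 1) :
    Tendsto (fun r => e r * a ^ ((5:ℝ)/3) * r ^ ((1:ℝ)/3)) atTop (𝓝 1) := by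
  have hlim : Tendsto (fun r => (1 - e r) ^ ((5:ℝ)/3)) atTop (𝓝 1) := by
    simpa using ((tendsto_const_nhds (x := (1:ℝ))).sub
      (tendsto_restitution_atTop_zero ha hrange himp)).rpow_const (p := (5:ℝ)/3) (by norm_num)
  refine hlim.congr' ?_
  filter_upwards [eventually_gt_atTop 0] with r hr
  exact (restitution_mul_eq ha.le hr (hrange r hr).1.le (himp r hr)).symm

lemma tendsto_restitution_nhdsGT_zero (ha : 0 ≤ a)
    (hrange : ∀ r : ℝ, 0 < r → e r ∈ Ioc 0 1)
    (himp : ∀ r : ℝ, 0 < r → e r + a * r ^ ((1:ℝ)/5) * e r ^ ((3:ℝ)/5) = 1) :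
    Tendsto e (𝓝[>] 0) (𝓝 1) := by
  have hcont : Continuous fun r : ℝ => 1 - a * r ^ ((1:ℝ)/5) :=
    continuous_const.sub (continuous_const.mul (Real.continuous_rpow_const (by norm_num)))
  refine tendsto_of_tendsto_of_tendsto_of_le_of_le' ((hcont.tendsto' 0 1 (by simp)).mono_left
    nhdsWithin_le_nhds) tendsto_const_nhds ?_ ?_
  · filter_upwards [self_mem_nhdsWithin] with r hr
    have := restitution_div_le ha hr (hrange r hr) (himp r hr)
    rw [div_le_iff₀ (Real.rpow_pos_of_pos hr _)] at this
    linarith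
  · filter_upwards [self_mem_nhdsWithin] with r hr using (hrange r hr).2

lemma sSup_restitution_div (ha : 0 ≤ a)
    (hrange : ∀ r : ℝ, 0 < r → e r ∈ Ioc 0 1)
    (himp : ∀ r : ℝ, 0 < r → e r + a * r ^ ((1:ℝ)/5) * e r ^ ((3:ℝ)/5) = 1) :
    sSup {y : ℝ | ∃ r : ℝ, 0 < r ∧ y = (1 - e r) / r ^ ((1:ℝ)/5)} = a := by
  have hlim : Tendsto (fun r => (1 - e r) / r ^ ((1:ℝ)/5)) (𝓝[>] 0) (𝓝 a) := by
    have := ((tendsto_restitution_nhdsGT_zero ha hrange himp).rpow_const (p := (3:ℝ)/5)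
      (by norm_num)).const_mul a
    rw [Real.one_rpow, mul_one] at this
    refine this.congr' ?_
    filter_upwards [self_mem_nhdsWithin] with r hr
    exact (restitution_div_eq hr (himp r hr)).symm
  set S := {y : ℝ | ∃ r : ℝ, 0 < r ∧ y = (1 - e r) / r ^ ((1:ℝ)/5)}
  have hub : a ∈ upperBounds S := by
    rintro _ ⟨r, hr, rfl⟩
    exact restitution_div_le ha hr (hrange r hr) (himp r hr)
  have hmem : a ∈ closure S :=
    mem_closure_of_tendsto hlim
      (by filter_upwards [self_mem_nhdsWithin] with r hr using ⟨r, hr, rfl⟩)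
  exact (isLUB_of_mem_closure hub hmem).csSup_eq ⟨_, 1, one_pos, rfl⟩

end Restitution

/-- Viscoelastic hard-spheres restitution coefficient `e(r) + a r^{1/5} e(r)^{3/5} = 1`:
existence and uniqueness of `e(r) ∈ (0,1]`, the large-`r` asymptotics
`e(r) a^{5/3} r^{1/3} → 1`, and `sup_{r>0} (1-e(r))/r^{1/5} = a`. -/
theorem viscoelastic_restitution (a : ℝ) (ha : 0 < a) (e : ℝ → ℝ)
    (hrange : ∀ r : ℝ, 0 < r → e r ∈ Set.Ioc (0:ℝ) 1)
    (himp : ∀ r : ℝ, 0 < r →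
      e r + a * r ^ ((1:ℝ)/5) * (e r) ^ ((3:ℝ)/5) = 1) :
    (∀ r : ℝ, 0 < r → ∃! x : ℝ,
        x ∈ Set.Ioc (0:ℝ) 1 ∧ x + a * r ^ ((1:ℝ)/5) * x ^ ((3:ℝ)/5) = 1) ∧
    Tendsto (fun r : ℝ => e r * a ^ ((5:ℝ)/3) * r ^ ((1:ℝ)/3)) atTop (nhds 1) ∧
    sSup {y : ℝ | ∃ r : ℝ, 0 < r ∧ y = (1 - e r) / r ^ ((1:ℝ)/5)} = a := by
  refine ⟨fun r hr => ⟨e r, ⟨hrange r hr, himp r hr⟩, fun x hx => ?_⟩,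
    tendsto_restitution_mul_atTop ha hrange himp, sSup_restitution_div ha.le hrange himp⟩
  exact (strictMonoOn_add_mul_rpow (by positivity) (by norm_num)).injOn hx.1.1.le
    (hrange r hr).1.le (hx.2.trans (himp r hr).symm)
end
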